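/- arXiv:1706.05120 — 3 statements merged into one kernel-verified Lean document; each statement's English description precedes it below -/
import Mathlib

section
/- If A is the adjacency matrix of an undirected path graph on n vertices with unit weights (A i j = 1 if |i−j| = 1, else 0) and b is the standard basis vector at one endpoint of the path, then the controllability matrix [b, Ab, ..., A^{n−1}b] is invertible. -/
/-- Controllability matrix: columns are `A^j b` for `j = 0, …, n-1`. -/
def ctrbMat {n : ℕ} (A : Matrix (Fin n) (Fin n) ℝ) (b : Fin n → ℝ) :
    Matrix (Fin n) (Fin n) ℝ :=
  Matrix.of fun i j => (A ^ (j : ℕ)).mulVec b i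

lemma path_key (n : ℕ) (hn : 1 ≤ n) (A : Matrix (Fin n) (Fin n) ℝ)
    (hA : ∀ i j : Fin n, A i j = if (i : ℕ) + 1 = j ∨ (j : ℕ) + 1 = i then 1 else 0) :
    ∀ j : ℕ, ∀ i : Fin n,
      (j < (i : ℕ) → (A ^ j).mulVec (Pi.single ⟨0, hn⟩ 1) i = 0) ∧
      ((i : ℕ) = j → (A ^ j).mulVec (Pi.single ⟨0, hn⟩ 1) i = 1) := by
  intro j
  induction j with
  | zero =>
    intro i
    constructor
    · intro hi
      have : i ≠ ⟨0, hn⟩ := by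
        intro h; rw [h] at hi; simp at hi
      simp [Matrix.one_mulVec, Pi.single_apply, this]
    · intro hi
      have : i = ⟨0, hn⟩ := by
        ext; simpa using hi
      simp [Matrix.one_mulVec, Pi.single_apply, this]
  | succ j ih =>
    intro i
    have hpow : (A ^ (j + 1)).mulVec (Pi.single ⟨0, hn⟩ 1) =
        A.mulVec ((A ^ j).mulVec (Pi.single ⟨0, hn⟩ 1)) := by
      rw [pow_succ', Matrix.mulVec_mulVec]
    set v := (A ^ j).mulVec (Pi.single ⟨0, hn⟩ 1) with hv
    constructor
    · intro hi
      rw [hpow]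
      unfold Matrix.mulVec dotProduct
      apply Finset.sum_eq_zero
      intro k _
      simp only [hA]
      by_cases h : (i : ℕ) + 1 = k ∨ (k : ℕ) + 1 = i
      · have hk : j < (k : ℕ) := by omega
        rw [(ih k).1 hk]
        ring
      · simp [h]
    · intro hi
      rw [hpow]
      unfold Matrix.mulVec dotProduct
      have hjn : j < n := by omega
      rw [Finset.sum_eq_single (⟨j, hjn⟩ : Fin n)]
      · simp only [hA]; rw [(ih ⟨j, hjn⟩).2 rfl]
        have : ((⟨j, hjn⟩ : Fin n) : ℕ) + 1 = (i : ℕ) := by simp [hi]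
        simp [this]
      · intro k _ hk
        simp only [hA]
        by_cases h : (i : ℕ) + 1 = k ∨ (k : ℕ) + 1 = i
        · rcases h with h | h
          · have : j < (k : ℕ) := by omega
            rw [(ih k).1 this]; ring
          · exfalso; apply hk; ext; simp; omega
        · simp [h]
      · intro h; exact absurd (Finset.mem_univ _) h

theorem stmt_2 (n : ℕ) (hn : 1 ≤ n) (A : Matrix (Fin n) (Fin n) ℝ)
    (hA : ∀ i j : Fin n, A i j = if (i : ℕ) + 1 = j ∨ (j : ℕ) + 1 = i then 1 else 0) :
    IsUnit (ctrbMat A (Pi.single ⟨0, hn⟩ 1)) := by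
  have key := path_key n hn A hA
  rw [Matrix.isUnit_iff_isUnit_det]
  have htri : (ctrbMat A (Pi.single ⟨0, hn⟩ 1)).BlockTriangular id := by
    intro i j hij
    exact (key (j : ℕ) i).1 hij
  rw [Matrix.det_of_upperTriangular htri]
  have : ∀ i : Fin n, ctrbMat A (Pi.single ⟨0, hn⟩ 1) i i = 1 := by
    intro i
    exact (key (i : ℕ) i).2 rfl
  rw [Finset.prod_congr rfl (fun i _ => this i)]
  simp
end

section
/- Let A ∈ ℝ^{n×n} be symmetric with spectral decomposition having an orthonormal eigenbasis v₁,...,vₙ. Then (A, b) is controllable if and only if A has n distinct eigenvalues and ⟨vᵢ, b⟩ ≠ 0 for every i. -/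
/-!
Let `V` be the matrix whose columns are the eigenvectors `vᵢ` and write `b = V c`, so that
`cᵢ = ⟨vᵢ, b⟩` by orthonormality. Then `Aʲ b = Σᵢ cᵢ μᵢʲ vᵢ`, i.e. the controllability matrix
factors as `V · diag(c) · Vand(μ)`. Since `V` is orthogonal, it is invertible exactly when
`diag(c) · Vand(μ)` is, and the determinant `(∏ cᵢ) · ∏_{i<j} (μⱼ - μᵢ)` of the latter is nonzero
exactly when all `cᵢ ≠ 0` and the `μᵢ` are distinct.
-/

open Matrix

theorem transpose_of_mul_of_eq_one {ι R : Type*} [Fintype ι] [DecidableEq ι] [CommRing R]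
    {v : ι → ι → R} (hortho : ∀ i j, v i ⬝ᵥ v j = if i = j then 1 else 0) :
    (of v)ᵀ * of v = 1 :=
  mul_eq_one_comm.mp <| by ext i j; simpa [mul_apply, one_apply, dotProduct] using hortho i j

theorem pow_mul_transpose_of_eq_transpose_of_mul_diagonal {ι R : Type*} [Fintype ι]
    [DecidableEq ι] [CommRing R] {A : Matrix ι ι R} {v : ι → ι → R} {μ : ι → R}
    (heig : ∀ i, A *ᵥ v i = μ i • v i) (j : ℕ) :
    A ^ j * (of v)ᵀ = (of v)ᵀ * diagonal (μ ^ j) := by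
  have hsemiconj : SemiconjBy (of v)ᵀ (diagonal μ) A := by
    ext k i
    rw [mul_diagonal, mul_apply, transpose_apply, of_apply, mul_comm]
    exact (congrFun (heig i) k).symm
  rw [← diagonal_pow]
  exact (hsemiconj.pow_right j).eq.symm

theorem ctrbMat_eq_transpose_of_mul_diagonal_mul_vandermonde {n : ℕ}
    {A : Matrix (Fin n) (Fin n) ℝ} {v : Fin n → Fin n → ℝ} {μ c : Fin n → ℝ}
    (heig : ∀ i, A *ᵥ v i = μ i • v i) :
    ctrbMat A ((of v)ᵀ *ᵥ c) = (of v)ᵀ * (diagonal c * vandermonde μ) := by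
  ext k j
  have hcol :
      (A ^ (j : ℕ) *ᵥ ((of v)ᵀ *ᵥ c)) k = (((of v)ᵀ * diagonal (μ ^ (j : ℕ))) *ᵥ c) k := by
    rw [mulVec_mulVec, pow_mul_transpose_of_eq_transpose_of_mul_diagonal heig]
  refine hcol.trans ?_
  simp only [mul_apply, mulVec, dotProduct, diagonal_apply, vandermonde_apply, transpose_apply,
    of_apply, Pi.pow_apply, ite_mul, zero_mul, mul_ite, mul_zero, Finset.sum_ite_eq,
    Finset.sum_ite_eq', Finset.mem_univ, if_true]
  refine Finset.sum_congr rfl fun i _ => ?_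
  ring

theorem isUnit_diagonal_mul_vandermonde_iff {K : Type*} [Field K] {n : ℕ} {c μ : Fin n → K} :
    IsUnit (diagonal c * vandermonde μ) ↔ Function.Injective μ ∧ ∀ i, c i ≠ 0 := by
  rw [isUnit_iff_isUnit_det, isUnit_iff_ne_zero, det_mul, det_diagonal, mul_ne_zero_iff,
    det_vandermonde_ne_zero_iff, Finset.prod_ne_zero_iff, and_comm]
  simp only [Finset.mem_univ, true_implies]

open Matrix in
theorem stmt_10_general (n : ℕ) (A : Matrix (Fin n) (Fin n) ℝ)
    (v : Fin n → Fin n → ℝ) (μ : Fin n → ℝ)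
    (hortho : ∀ i j, v i ⬝ᵥ v j = if i = j then 1 else 0)
    (heig : ∀ i, A.mulVec (v i) = μ i • v i) (b : Fin n → ℝ) :
    IsUnit (ctrbMat A b) ↔ Function.Injective μ ∧ ∀ i, v i ⬝ᵥ b ≠ 0 := by
  have hV := transpose_of_mul_of_eq_one hortho
  have hb : b = (of v)ᵀ *ᵥ fun i => v i ⬝ᵥ b := by
    conv_lhs => rw [← one_mulVec b, ← hV, ← mulVec_mulVec]
    rfl
  nth_rw 1 [hb]
  rw [ctrbMat_eq_transpose_of_mul_diagonal_mul_vandermonde heig, isUnit_iff_isUnit_det,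
    det_mul, IsUnit.mul_iff, and_iff_right (isUnit_det_of_right_inverse hV),
    ← isUnit_iff_isUnit_det, isUnit_diagonal_mul_vandermonde_iff]

open Matrix in
theorem stmt_10 (n : ℕ) (A : Matrix (Fin n) (Fin n) ℝ) (hA : A.IsSymm)
    (v : Fin n → Fin n → ℝ) (μ : Fin n → ℝ)
    (hortho : ∀ i j, v i ⬝ᵥ v j = if i = j then 1 else 0)
    (heig : ∀ i, A.mulVec (v i) = μ i • v i) (b : Fin n → ℝ) :
    IsUnit (ctrbMat A b) ↔ Function.Injective μ ∧ ∀ i, v i ⬝ᵥ b ≠ 0 :=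
  stmt_10_general n A v μ hortho heig b
end

section
/- For the tridiagonal symmetric matrix A with arbitrary nonzero off-diagonal weights a_{i,i+1} = a_{i+1,i} = c_i ≠ 0 and zeros elsewhere, and b = e₀, the pair (A, b) is controllable. -/
lemma key_15 (n : ℕ) (hn : 1 ≤ n) (c : ℕ → ℝ) (A : Matrix (Fin n) (Fin n) ℝ)
    (hA : ∀ i j : Fin n,
      A i j = if (i : ℕ) + 1 = j ∨ (j : ℕ) + 1 = i then c (min (i : ℕ) j) else 0) :
    ∀ j : ℕ,
      (∀ i : Fin n, j < (i : ℕ) → (A ^ j).mulVec (Pi.single ⟨0, hn⟩ 1) i = 0) ∧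
      (∀ hj : j < n, (A ^ j).mulVec (Pi.single ⟨0, hn⟩ 1) ⟨j, hj⟩ =
        ∏ k ∈ Finset.range j, c k) := by
  intro j
  induction j with
  | zero =>
    constructor
    · intro i hi
      simp only [pow_zero, Matrix.one_mulVec]
      exact Pi.single_eq_of_ne (by exact fun h => by simp [Fin.ext_iff] at h; omega) 1
    · intro hj
      simp [pow_zero, Matrix.one_mulVec, Pi.single_eq_same]
  | succ j ih =>
    have hstep : ∀ (w : Fin n → ℝ) (i : Fin n),
        (A ^ (j+1)).mulVec w i = ∑ k, A i k * (A ^ j).mulVec w k := by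
      intro w i
      rw [pow_succ', ← Matrix.mulVec_mulVec]
      rfl
    constructor
    · intro i hi
      rw [hstep]
      apply Finset.sum_eq_zero
      intro k _
      rw [hA]
      by_cases h : (i : ℕ) + 1 = k ∨ (k : ℕ) + 1 = i
      · rw [if_pos h, ih.1 k (by omega), mul_zero]
      · rw [if_neg h, zero_mul]
    · intro hj
      have hjn : j < n := by omega
      rw [hstep]
      rw [Finset.sum_eq_single (⟨j, hjn⟩ : Fin n)]
      · rw [hA]
        have : ((⟨j+1, hj⟩ : Fin n) : ℕ) + 1 = (⟨j, hjn⟩ : Fin n) ∨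
            ((⟨j, hjn⟩ : Fin n) : ℕ) + 1 = (⟨j+1, hj⟩ : Fin n) := by right; rfl
        rw [if_pos this]
        have hmin : min (((⟨j+1, hj⟩ : Fin n)) : ℕ) ((⟨j, hjn⟩ : Fin n) : ℕ) = j := by
          simp
        rw [hmin, ih.2 hjn, Finset.prod_range_succ]
        ring
      · intro k _ hk
        rw [hA]
        by_cases h : ((⟨j+1, hj⟩ : Fin n) : ℕ) + 1 = k ∨ (k : ℕ) + 1 = (⟨j+1, hj⟩ : Fin n)
        · have h' : j + 1 + 1 = (k : ℕ) ∨ (k : ℕ) + 1 = j + 1 := h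
          have hkj : (k : ℕ) ≠ j := fun hh => hk (Fin.ext hh)
          rw [if_pos h, ih.1 k (by omega), mul_zero]
        · rw [if_neg h, zero_mul]
      · intro h
        simp at h
  
theorem stmt_15 (n : ℕ) (hn : 1 ≤ n) (c : ℕ → ℝ)
    (hc : ∀ i, i < n - 1 → c i ≠ 0) (A : Matrix (Fin n) (Fin n) ℝ)
    (hA : ∀ i j : Fin n,
      A i j = if (i : ℕ) + 1 = j ∨ (j : ℕ) + 1 = i then c (min (i : ℕ) j) else 0) :
    IsUnit (ctrbMat A (Pi.single ⟨0, hn⟩ 1)) := by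
  have key := key_15 n hn c A hA
  rw [Matrix.isUnit_iff_isUnit_det, isUnit_iff_ne_zero]
  have htri : (ctrbMat A (Pi.single ⟨0, hn⟩ 1)).BlockTriangular id := by
    intro i k hik
    exact (key k).1 i hik
  rw [Matrix.det_of_upperTriangular htri]
  apply Finset.prod_ne_zero_iff.2
  intro i _
  have : (ctrbMat A (Pi.single ⟨0, hn⟩ 1)) i i = ∏ k ∈ Finset.range i, c k := by
    have := (key (i : ℕ)).2 i.isLt
    simpa [ctrbMat] using this
  rw [this]
  apply Finset.prod_ne_zero_iff.2
  intro k hk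
  simp at hk
  exact hc k (by omega)
end
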